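/- Let Γ = (V, E) be a finite simple graph. Then the independence number α(Γ) equals the maximum of Σ_{v∈V} y({v}) over all functions y : 𝒫(V) → ℝ satisfying: y(∅) = 1; y(S) = 0 for every S ⊆ V that contains both endpoints of some edge of Γ; and the moment matrix M(y), with entries M(y)_{S,T} = y(S ∪ T), is positive semidefinite. -/

import Mathlib

open Matrix Finset

/-!
Möbius inversion on the Boolean lattice writes any `y` as `y S = ∑_{C ⊇ S} λ C`, and then
`M(y) = Z · diag λ · Zᵀ` with `Z` the invertible zeta matrix of `⊆`; so `M(y)` is positive
semidefinite exactly when `λ ≥ 0`. For a feasible `y`, `λ` is then a probability distribution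
(`∑ λ = y ∅ = 1`) supported on independent sets (`y {u, v} = 0` kills every `λ C` with `C ⊇ {u, v}`),
and `∑_v y {v} = ∑_C |C| λ C ≤ α`. The point mass at a maximum independent set attains `α`.
-/

namespace Finset
variable {ι R : Type*} [DecidableEq ι] [CommRing R]

theorem sum_Icc_neg_one_pow_card_add_card (A B : Finset ι) :
    ∑ S ∈ Icc A B, (-1 : R) ^ (#A + #S) = if A = B then 1 else 0 := by
  by_cases hAB : A ⊆ B
  · have hdisj : ∀ C ∈ (B \ A).powerset, Disjoint A C := fun C hC =>
      disjoint_sdiff.mono_right (mem_powerset.1 hC)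
    rw [Icc_eq_image_powerset hAB, sum_image fun C hC D hD h => by
      rw [← union_sdiff_cancel_left (hdisj C hC), h, union_sdiff_cancel_left (hdisj D hD)]]
    calc ∑ C ∈ (B \ A).powerset, (-1 : R) ^ (#A + #(A ∪ C))
        = ((∑ C ∈ (B \ A).powerset, (-1 : ℤ) ^ #C : ℤ) : R) := by
          push_cast
          refine sum_congr rfl fun C hC => ?_
          rw [card_union_of_disjoint (hdisj C hC), ← add_assoc, pow_add, ← two_mul, pow_mul]
          simp
      _ = if A = B then 1 else 0 := by
          have : B \ A = ∅ ↔ A = B := by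
            rw [sdiff_eq_empty_iff_subset, subset_antisymm_iff]; simp [hAB]
          rw [sum_powerset_neg_one_pow_card]
          simp only [this]
          split_ifs <;> simp
  · rw [Icc_eq_empty hAB, sum_empty, if_neg (by rintro rfl; exact hAB subset_rfl)]

end Finset

namespace Matrix
variable (ι R : Type*) [Fintype ι] [DecidableEq ι] [CommRing R]

def subsetZeta : Matrix (Finset ι) (Finset ι) R := of fun S T => if S ⊆ T then 1 else 0

/-- The Möbius function of `⊆` is `(-1) ^ #(T \ S)`; `#S + #T` has the same parity. -/
def subsetMoebius : Matrix (Finset ι) (Finset ι) R :=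
  of fun S T => if S ⊆ T then (-1) ^ (#S + #T) else 0

theorem subsetMoebius_mul_subsetZeta : subsetMoebius ι R * subsetZeta ι R = 1 := by
  ext A C
  have hIcc : ({B | A ⊆ B ∧ B ⊆ C} : Finset (Finset ι)) = Icc A C := by ext; simp
  rw [mul_apply, one_apply, ← sum_Icc_neg_one_pow_card_add_card, ← hIcc, sum_filter]
  refine sum_congr rfl fun B _ => ?_
  simp only [subsetMoebius, subsetZeta, of_apply, mul_boole]
  split_ifs <;> simp_all

theorem subsetZeta_mul_subsetMoebius : subsetZeta ι R * subsetMoebius ι R = 1 :=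
  mul_eq_one_comm.1 (subsetMoebius_mul_subsetZeta ι R)

theorem isUnit_subsetZeta : IsUnit (subsetZeta ι R) :=
  ⟨⟨_, _, subsetZeta_mul_subsetMoebius ι R, subsetMoebius_mul_subsetZeta ι R⟩, rfl⟩

variable {ι R}

theorem subsetZeta_mulVec_apply (f : Finset ι → R) (S : Finset ι) :
    (subsetZeta ι R *ᵥ f) S = ∑ C with S ⊆ C, f C := by
  simp [mulVec, dotProduct, subsetZeta, sum_filter]

theorem subsetZeta_mulVec_subsetMoebius_mulVec (y : Finset ι → R) :
    subsetZeta ι R *ᵥ (subsetMoebius ι R *ᵥ y) = y := by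
  rw [mulVec_mulVec, subsetZeta_mul_subsetMoebius, one_mulVec]

def momentMatrix (y : Finset ι → R) : Matrix (Finset ι) (Finset ι) R := of fun S T => y (S ∪ T)

theorem momentMatrix_eq (y : Finset ι → R) :
    momentMatrix y =
      subsetZeta ι R * diagonal (subsetMoebius ι R *ᵥ y) * (subsetZeta ι R)ᵀ := by
  ext S T
  conv_lhs => rw [momentMatrix, of_apply, ← subsetZeta_mulVec_subsetMoebius_mulVec y,
    subsetZeta_mulVec_apply]
  rw [mul_apply, sum_filter]
  simp only [mul_diagonal, transpose_apply, subsetZeta, of_apply, union_subset_iff]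
  refine sum_congr rfl fun C _ => ?_
  split_ifs <;> simp_all

theorem posSemidef_momentMatrix_iff (y : Finset ι → ℝ) :
    (momentMatrix y).PosSemidef ↔ 0 ≤ subsetMoebius ι ℝ *ᵥ y := by
  rw [momentMatrix_eq, ← conjTranspose_eq_transpose_of_trivial, ← star_eq_conjTranspose,
    (isUnit_subsetZeta ι ℝ).posSemidef_star_right_conjugate_iff, posSemidef_diagonal_iff,
    Pi.le_def]
  rfl

theorem subsetZeta_mulVec_empty (f : Finset ι → R) : (subsetZeta ι R *ᵥ f) ∅ = ∑ C, f C := by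
  simp [subsetZeta_mulVec_apply]

theorem subsetZeta_mulVec_single (s S : Finset ι) (r : R) :
    (subsetZeta ι R *ᵥ Pi.single s r) S = if S ⊆ s then r else 0 := by
  simp [subsetZeta_mulVec_apply, Pi.single_apply]

theorem sum_subsetZeta_mulVec_singleton (f : Finset ι → R) :
    ∑ v, (subsetZeta ι R *ᵥ f) {v} = ∑ C, #C * f C := by
  simp only [subsetZeta_mulVec_apply, singleton_subset_iff, sum_filter]
  rw [sum_comm]
  simp [sum_ite_mem]

theorem eq_zero_of_subsetZeta_mulVec_eq_zero {f : Finset ι → ℝ} (hf : 0 ≤ f) {S C : Finset ι}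
    (hS : (subsetZeta ι ℝ *ᵥ f) S = 0) (hSC : S ⊆ C) : f C = 0 := by
  rw [subsetZeta_mulVec_apply, sum_eq_zero_iff_of_nonneg fun C _ => hf C] at hS
  exact hS C (by simpa using hSC)

theorem posSemidef_momentMatrix_subsetZeta_mulVec {f : Finset ι → ℝ} (hf : 0 ≤ f) :
    (momentMatrix (subsetZeta ι ℝ *ᵥ f)).PosSemidef := by
  rwa [posSemidef_momentMatrix_iff, mulVec_mulVec, subsetMoebius_mul_subsetZeta, one_mulVec]

end Matrix

namespace SimpleGraph
variable {V : Type*} [Fintype V] [DecidableEq V] (Γ : SimpleGraph V)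

theorem exists_moment_of_independent {s : Finset V} (hs : ∀ u ∈ s, ∀ v ∈ s, ¬ Γ.Adj u v) :
    ∃ y : Finset V → ℝ, y ∅ = 1 ∧
      (∀ S : Finset V, (∃ u ∈ S, ∃ v ∈ S, Γ.Adj u v) → y S = 0) ∧
      (momentMatrix y).PosSemidef ∧ (#s : ℝ) = ∑ v, y {v} := by
  refine ⟨subsetZeta V ℝ *ᵥ Pi.single s 1, by simp [subsetZeta_mulVec_single], ?_,
    posSemidef_momentMatrix_subsetZeta_mulVec (Pi.single_nonneg.2 zero_le_one), ?_⟩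
  · rintro S ⟨u, hu, v, hv, huv⟩
    rw [subsetZeta_mulVec_single, if_neg fun hSs => hs u (hSs hu) v (hSs hv) huv]
  · rw [sum_subsetZeta_mulVec_singleton]
    simp [Pi.single_apply]

theorem sum_singleton_le_of_posSemidef_momentMatrix {a : ℕ}
    (ha : ∀ s : Finset V, (∀ u ∈ s, ∀ v ∈ s, ¬ Γ.Adj u v) → #s ≤ a) {y : Finset V → ℝ}
    (hy₀ : y ∅ = 1) (hyΓ : ∀ u v, Γ.Adj u v → y {u, v} = 0) (hyM : (momentMatrix y).PosSemidef) :
    ∑ v, y {v} ≤ a := by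
  set f := subsetMoebius V ℝ *ᵥ y
  have hf : 0 ≤ f := (posSemidef_momentMatrix_iff y).1 hyM
  have hy : subsetZeta V ℝ *ᵥ f = y := subsetZeta_mulVec_subsetMoebius_mulVec y
  have hsupp : ∀ C, f C ≠ 0 → #C ≤ a := fun C hC => ha C fun u hu v hv huv =>
    hC (eq_zero_of_subsetZeta_mulVec_eq_zero hf (hy ▸ hyΓ u v huv) (insert_subset hu (by simpa)))
  calc ∑ v, y {v} = ∑ C, #C * f C := by rw [← hy, sum_subsetZeta_mulVec_singleton]
    _ ≤ ∑ C, a * f C := sum_le_sum fun C _ => by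
        by_cases hC : f C = 0
        · simp [hC]
        · exact mul_le_mul_of_nonneg_right (by exact_mod_cast hsupp C hC) (hf C)
    _ = a := by rw [← mul_sum, ← subsetZeta_mulVec_empty, hy, hy₀, mul_one]

end SimpleGraph

/-- The independence number of a finite simple graph `Γ` equals
the maximum of `∑_v y {v}` over all `y : 𝒫(V) → ℝ` with `y ∅ = 1`, `y S = 0`
whenever `S` contains an edge, and positive semidefinite moment matrix
`M(y)_{S,T} = y (S ∪ T)`. -/
theorem independence_number_eq_max_moment_sdp {V : Type*} [Fintype V] [DecidableEq V]
    (Γ : SimpleGraph V) (a : ℕ)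
    (ha : IsGreatest
      {k : ℕ | ∃ s : Finset V, (∀ u ∈ s, ∀ v ∈ s, ¬ Γ.Adj u v) ∧ s.card = k} a) :
    IsGreatest
      {r : ℝ | ∃ y : Finset V → ℝ,
        y ∅ = 1 ∧
        (∀ S : Finset V, (∃ u ∈ S, ∃ v ∈ S, Γ.Adj u v) → y S = 0) ∧
        (Matrix.of fun S T : Finset V => y (S ∪ T)).PosSemidef ∧
        r = ∑ v : V, y {v}}
      (a : ℝ) := by
  constructor
  · obtain ⟨s, hs, rfl⟩ := ha.1
    exact Γ.exists_moment_of_independent hs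
  · rintro r ⟨y, hy₀, hyΓ, hyM, rfl⟩
    exact Γ.sum_singleton_le_of_posSemidef_momentMatrix (fun s hs => ha.2 ⟨s, hs, rfl⟩) hy₀
      (fun u v huv => hyΓ _ ⟨u, by simp, v, by simp, huv⟩) hyM
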